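/- In a monoidal dagger category with duals, the following three conditions on the duality structure are equivalent: (1) ((-)^{*L})† = ((-)†)^{*L}; (2) ((-)^{*R})† = ((-)†)^{*R}; (3) the left duality functor equals the right duality functor, (-)^{*L} = (-)^{*R}. -/

import Mathlib

open CategoryTheory MonoidalCategory

namespace QAlg

variable {C : Type*} [Category C] [MonoidalCategory C]

/-- A dagger structure on a category. -/
structure Dagger (C : Type*) [Category C] where
  dag : ∀ {X Y : C}, (X ⟶ Y) → (Y ⟶ X)
  dag_dag : ∀ {X Y : C} (f : X ⟶ Y), dag (dag f) = f
  dag_id : ∀ X : C, dag (𝟙 X) = 𝟙 X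
  dag_comp : ∀ {X Y Z : C} (f : X ⟶ Y) (g : Y ⟶ Z), dag (f ≫ g) = dag g ≫ dag f

/-- A monoidal dagger category: the dagger is monoidal and the coherence
isomorphisms are unitary. -/
structure MonoidalDagger (C : Type*) [Category C] [MonoidalCategory C] extends Dagger C where
  dag_tensorHom : ∀ {W X Y Z : C} (f : W ⟶ X) (g : Y ⟶ Z), dag (f ⊗ₘ g) = dag f ⊗ₘ dag g
  dag_associator : ∀ X Y Z : C, dag (α_ X Y Z).hom = (α_ X Y Z).inv
  dag_leftUnitor : ∀ X : C, dag (λ_ X).hom = (λ_ X).inv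
  dag_rightUnitor : ∀ X : C, dag (ρ_ X).hom = (ρ_ X).inv

/-- A morphism is unitary if its dagger is its inverse. -/
def Dagger.IsUnitary (D : Dagger C) {X Y : C} (f : X ⟶ Y) : Prop :=
  f ≫ D.dag f = 𝟙 X ∧ D.dag f ≫ f = 𝟙 Y

/-- Assigned duals and left/right duality morphisms, compatible with the dagger
(the compatibility equations between the duality morphisms, but *not* yet the
condition `((-)^{*L})† = ((-)†)^{*L}`). -/
structure PreDuals (D : MonoidalDagger C) where
  star : C → C
  ε : ∀ A : C, 𝟙_ C ⟶ star A ⊗ A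
  η : ∀ A : C, A ⊗ star A ⟶ 𝟙_ C
  εR : ∀ A : C, 𝟙_ C ⟶ A ⊗ star A
  ηR : ∀ A : C, star A ⊗ A ⟶ 𝟙_ C
  triangle_left₁ : ∀ A : C,
    (ρ_ A).inv ≫ (A ◁ ε A) ≫ (α_ A (star A) A).inv ≫ (η A ▷ A) ≫ (λ_ A).hom = 𝟙 A
  triangle_left₂ : ∀ A : C,
    (λ_ (star A)).inv ≫ (ε A ▷ star A) ≫ (α_ (star A) A (star A)).hom ≫
      (star A ◁ η A) ≫ (ρ_ (star A)).hom = 𝟙 (star A)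
  triangle_right₁ : ∀ A : C,
    (λ_ A).inv ≫ (εR A ▷ A) ≫ (α_ A (star A) A).hom ≫ (A ◁ ηR A) ≫ (ρ_ A).hom = 𝟙 A
  triangle_right₂ : ∀ A : C,
    (ρ_ (star A)).inv ≫ (star A ◁ εR A) ≫ (α_ (star A) A (star A)).inv ≫
      (ηR A ▷ star A) ≫ (λ_ (star A)).hom = 𝟙 (star A)
  star_star : ∀ A : C, star (star A) = A
  star_tensor : ∀ A B : C, star (A ⊗ B) = star B ⊗ star A
  star_unit : star (𝟙_ C) = 𝟙_ C
  ε_eq_dag_ηR : ∀ A : C, ε A = D.dag (ηR A)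
  η_eq_dag_εR : ∀ A : C, η A = D.dag (εR A)
  ε_eq_dag_η_star : ∀ A : C,
    ε A = D.dag (η (star A)) ≫ (star A ◁ eqToHom (star_star A))
  ε_eq_εR_star : ∀ A : C,
    ε A = εR (star A) ≫ (star A ◁ eqToHom (star_star A))
  η_eq_dag_ε_star : ∀ A : C,
    η A = (eqToHom (star_star A).symm ▷ star A) ≫ D.dag (ε (star A))
  η_eq_ηR_star : ∀ A : C,
    η A = (eqToHom (star_star A).symm ▷ star A) ≫ ηR (star A)

variable {D : MonoidalDagger C}

/-- The left duality functor on morphisms. -/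
def PreDuals.starL (P : PreDuals D) {A B : C} (f : A ⟶ B) : P.star B ⟶ P.star A :=
  (λ_ (P.star B)).inv ≫ (P.ε A ▷ P.star B) ≫ (α_ (P.star A) A (P.star B)).hom ≫
    (P.star A ◁ (f ▷ P.star B)) ≫ (P.star A ◁ P.η B) ≫ (ρ_ (P.star A)).hom

/-- The right duality functor on morphisms. -/
def PreDuals.starR (P : PreDuals D) {A B : C} (f : A ⟶ B) : P.star B ⟶ P.star A :=
  (ρ_ (P.star B)).inv ≫ (P.star B ◁ P.εR A) ≫ (α_ (P.star B) A (P.star A)).inv ≫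
    ((P.star B ◁ f) ▷ P.star A) ≫ (P.ηR B ▷ P.star A) ≫ (λ_ (P.star A)).hom

/-- A monoidal dagger category with duals: additionally `((-)^{*L})† = ((-)†)^{*L}`. -/
structure Duals (D : MonoidalDagger C) extends PreDuals D where
  dag_starL : ∀ {A B : C} (f : A ⟶ B),
    D.dag (toPreDuals.starL f) = toPreDuals.starL (D.dag f)

/-- The conjugation functor `f ↦ f_* = (f^*)† = (f†)^*`. -/
def Duals.conj (P : Duals D) {A B : C} (f : A ⟶ B) : P.star A ⟶ P.star B :=
  D.dag (P.starL f)

/-- The abstract dimension of an object, `ε† ∘ ε`. -/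
def Duals.dim (P : Duals D) (A : C) : 𝟙_ C ⟶ 𝟙_ C :=
  P.ε A ≫ D.dag (P.ε A)

/-- Monoid data on an object. -/
structure MonoidOn (A : C) where
  m : A ⊗ A ⟶ A
  u : 𝟙_ C ⟶ A

/-- The monoid axioms. -/
def MonoidOn.IsMonoid {A : C} (M : MonoidOn A) : Prop :=
  ((M.u ▷ A) ≫ M.m = (λ_ A).hom) ∧ ((A ◁ M.u) ≫ M.m = (ρ_ A).hom) ∧
    ((M.m ▷ A) ≫ M.m = (α_ A A A).hom ≫ (A ◁ M.m) ≫ M.m)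

/-- The dagger Frobenius condition: the adjoint comonoid satisfies the
Frobenius law with the monoid. -/
def MonoidOn.IsDagFrobenius {A : C} (M : MonoidOn A) (D : MonoidalDagger C) : Prop :=
  ((D.dag M.m ▷ A) ≫ (α_ A A A).hom ≫ (A ◁ M.m) = M.m ≫ D.dag M.m) ∧
    ((A ◁ D.dag M.m) ≫ (α_ A A A).inv ≫ (M.m ▷ A) = M.m ≫ D.dag M.m)

/-- The canonical left involution of a dagger Frobenius monoid. -/
def Duals.sL (P : Duals D) {A : C} (M : MonoidOn A) : A ⟶ P.star A :=
  (ρ_ A).inv ≫ (A ◁ (P.ε (P.star A) ≫ (eqToHom (P.star_star A) ▷ P.star A))) ≫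
    (α_ A A (P.star A)).inv ≫ ((M.m ≫ D.dag M.u) ▷ P.star A) ≫ (λ_ (P.star A)).hom

/-- The canonical right involution of a dagger Frobenius monoid. -/
def Duals.sR (P : Duals D) {A : C} (M : MonoidOn A) : A ⟶ P.star A :=
  (λ_ A).inv ≫ (P.ε A ▷ A) ≫ (α_ (P.star A) A A).hom ≫
    (P.star A ◁ (M.m ≫ D.dag M.u)) ≫ (ρ_ (P.star A)).hom

/-- Multiplication of the conjugate monoid on `A*`. -/
def Duals.conjMul (P : Duals D) {A : C} (M : MonoidOn A) : P.star A ⊗ P.star A ⟶ P.star A :=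
  eqToHom (P.star_tensor A A).symm ≫ P.conj M.m

/-- Unit of the conjugate monoid on `A*`. -/
def Duals.conjUnit (P : Duals D) {A : C} (M : MonoidOn A) : 𝟙_ C ⟶ P.star A :=
  eqToHom P.star_unit.symm ≫ P.conj M.u

/-- `s : A ⟶ A*` makes the monoid `M` into an involution monoid: it is a monoid
homomorphism to the conjugate monoid and satisfies `s_* ∘ s = id` (via `A** = A`). -/
def Duals.IsInvolutionMonoid (P : Duals D) {A : C} (M : MonoidOn A) (s : A ⟶ P.star A) : Prop :=
  (M.m ≫ s = (s ⊗ₘ s) ≫ P.conjMul M) ∧ (M.u ≫ s = P.conjUnit M) ∧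
    (s ≫ P.conj s ≫ eqToHom (P.star_star A) = 𝟙 A)

/-- Monoid homomorphism property. -/
def IsMonoidHom {A B : C} (M : MonoidOn A) (N : MonoidOn B) (f : A ⟶ B) : Prop :=
  (M.m ≫ f = (f ⊗ₘ f) ≫ N.m) ∧ (M.u ≫ f = N.u)

/-- The endomorphism monoid `End(A)` on `A* ⊗ A`. -/
def Duals.endM (P : Duals D) (A : C) : MonoidOn (P.star A ⊗ A) where
  m := (α_ (P.star A) A (P.star A ⊗ A)).hom ≫ (P.star A ◁ (α_ A (P.star A) A).inv) ≫
    (P.star A ◁ (P.η A ▷ A)) ≫ (P.star A ◁ (λ_ A).hom)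
  u := P.ε A

/-!
The compatibility equations identify `ε†` with `ηR` and `η†` with `εR`, so taking the dagger of
the string diagram defining `f^{*L}` yields, after one associator naturality move, exactly the
diagram defining `(f†)^{*R}`. Hence both (1) and (2) say that `(-)^{*L}` and `(-)^{*R}` agree on
all daggered morphisms, which is all morphisms since `†` is involutive.
-/

namespace MonoidalDagger

variable (D : MonoidalDagger C)

lemma dag_whiskerLeft (X : C) {Y Z : C} (f : Y ⟶ Z) : D.dag (X ◁ f) = X ◁ D.dag f := by
  rw [← id_tensorHom, ← id_tensorHom, D.dag_tensorHom, D.dag_id]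

lemma dag_whiskerRight {Y Z : C} (f : Y ⟶ Z) (X : C) : D.dag (f ▷ X) = D.dag f ▷ X := by
  rw [← tensorHom_id, ← tensorHom_id, D.dag_tensorHom, D.dag_id]

lemma dag_leftUnitor_inv (X : C) : D.dag (λ_ X).inv = (λ_ X).hom := by
  rw [← D.dag_leftUnitor, D.dag_dag]

end MonoidalDagger

namespace PreDuals

variable (P : PreDuals D)

lemma dag_ε (A : C) : D.dag (P.ε A) = P.ηR A := by
  rw [P.ε_eq_dag_ηR, D.dag_dag]

lemma dag_η (A : C) : D.dag (P.η A) = P.εR A := by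
  rw [P.η_eq_dag_εR, D.dag_dag]

lemma dag_starL {A B : C} (f : A ⟶ B) : D.dag (P.starL f) = P.starR (D.dag f) := by
  simp only [starL, starR, D.dag_comp, D.dag_whiskerLeft, D.dag_whiskerRight, D.dag_associator,
    D.dag_rightUnitor, D.dag_leftUnitor_inv, P.dag_ε, P.dag_η, Category.assoc,
    associator_inv_naturality_middle_assoc]

lemma dag_starR {A B : C} (f : A ⟶ B) : D.dag (P.starR f) = P.starL (D.dag f) := by
  simpa only [D.dag_dag] using (congrArg D.dag (P.dag_starL (D.dag f))).symm

lemma starL_dag_eq_starR_dag_iff :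
    (∀ (A B : C) (f : A ⟶ B), P.starL (D.dag f) = P.starR (D.dag f)) ↔
      ∀ (A B : C) (f : A ⟶ B), P.starL f = P.starR f :=
  ⟨fun h A B f => by simpa only [D.dag_dag] using h B A (D.dag f), fun h _ _ _ => h _ _ _⟩

end PreDuals

theorem stmt2 {C : Type*} [Category C] [MonoidalCategory C] {D : MonoidalDagger C}
    (P : PreDuals D) :
    ((∀ (A B : C) (f : A ⟶ B), D.dag (P.starL f) = P.starL (D.dag f)) ↔
      (∀ (A B : C) (f : A ⟶ B), P.starL f = P.starR f)) ∧
    ((∀ (A B : C) (f : A ⟶ B), D.dag (P.starR f) = P.starR (D.dag f)) ↔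
      (∀ (A B : C) (f : A ⟶ B), P.starL f = P.starR f)) := by
  constructor
  · simp only [P.dag_starL, @eq_comm _ (P.starR _)]
    exact P.starL_dag_eq_starR_dag_iff
  · simp only [P.dag_starR]
    exact P.starL_dag_eq_starR_dag_iff

end QAlg
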